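/- For every stream s and every natural number n: the suffix s|n is almost always blue (pre (s|n)) if and only if n is accessible with respect to the relation ≻ₛ. In particular (n = 0), pre s holds iff 0 is accessible with respect to ≻ₛ. -/

import Mathlib

/-- The suffix of a stream at position `n`. -/
def suff (s : ℕ → Bool) (n : ℕ) : ℕ → Bool := fun k => s (n + k)

/-- The weak-until predicate transformer (greatest fixed point, impredicative). -/
def W (X : (ℕ → Bool) → Prop) (s : ℕ → Bool) : Prop :=
  ∃ Y : (ℕ → Bool) → Prop, Y s ∧
    ∀ t, Y t → (t 0 = true → X (suff t 1)) ∧ (t 0 = false → Y (suff t 1))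

/-- A stream is almost always blue: least fixed point of `W`. -/
def pre (s : ℕ → Bool) : Prop :=
  ∀ P : (ℕ → Bool) → Prop, (∀ t, W P t → P t) → P s

/-- The strong-until predicate transformer (inductive). -/
inductive U (X : (ℕ → Bool) → Prop) : (ℕ → Bool) → Prop
  | red : ∀ t, t 0 = true → X (suff t 1) → U X t
  | blue : ∀ t, t 0 = false → U X (suff t 1) → U X t

/-- A stream is infinitely often red: greatest fixed point of `U`. -/
def rep (s : ℕ → Bool) : Prop :=
  ∃ P : (ℕ → Bool) → Prop, P s ∧ ∀ t, P t → U P t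

/-- `succs s n m` : `m` is the position following the first red position at or after `n`. -/
def succs (s : ℕ → Bool) (n m : ℕ) : Prop :=
  ∃ l, n ≤ l ∧ (∀ k, n ≤ k → k < l → s k = false) ∧ s l = true ∧ m = l + 1

/-- The set of red positions of a stream. -/
def Reds (s : ℕ → Bool) : Set ℕ := {n | s n = true}

/-- The set of blue positions of a stream. -/
def Blues (s : ℕ → Bool) : Set ℕ := {n | s n = false}

/-- A colist is duplicate-free over `A`: entries lie in `A` and entries at
distinct positions are distinct. -/
def DupFree (l : Stream'.Seq ℕ) (A : Set ℕ) : Prop :=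
  (∀ n x, l.get? n = some x → x ∈ A) ∧
  (∀ m n x y, m ≠ n → l.get? m = some x → l.get? n = some y → x ≠ y)

/-- A set of naturals is streamless if every duplicate-free colist over it is finite. -/
def Streamless (A : Set ℕ) : Prop :=
  ∀ l : Stream'.Seq ℕ, DupFree l A → l.Terminates

/-- A set of naturals is almost full if every strictly increasing sequence hits it. -/
def AlmostFull (A : Set ℕ) : Prop :=
  ∀ i : ℕ → ℕ, StrictMono i → ∃ n, i n ∈ A

/-- A colist is a descending chain of the relation `r` starting at `x`. -/
def IsDescChain (r : ℕ → ℕ → Prop) (x : ℕ) (l : Stream'.Seq ℕ) : Prop :=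
  (∀ y, l.get? 0 = some y → r x y) ∧
  (∀ n a b, l.get? n = some a → l.get? (n + 1) = some b → r a b)

/-- `r` is strongly normalizing at `x`: every descending chain starting at `x` is finite. -/
def SN (r : ℕ → ℕ → Prop) (x : ℕ) : Prop :=
  ∀ l : Stream'.Seq ℕ, IsDescChain r x l → l.Terminates

/-- `n` is antifounded wrt `r`: greatest fixed point of the one-step descent operator. -/
def af (r : ℕ → ℕ → Prop) (n : ℕ) : Prop :=
  ∃ Q : ℕ → Prop, Q n ∧ ∀ k, Q k → ∃ m, r k m ∧ Q m

/-- `atmost n s`: fewer than `n` red positions up to every position `m`. -/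
def atmost (n : ℕ) (s : ℕ → Bool) : Prop :=
  ∀ m, ((Finset.range (m + 1)).filter (fun k => s k = true)).card < n

/-- Iterates of the weak-until operator starting from the empty predicate. -/
def Fiter : ℕ → (ℕ → Bool) → Prop
  | 0 => fun _ => False
  | n + 1 => W (Fiter n)

/-- The ω-iterate of the weak-until operator. -/
def Fomega (s : ℕ → Bool) : Prop := ∃ n, Fiter n s

/-- The Lesser Principle of Omniscience. -/
def LPO : Prop := ∀ s : ℕ → Bool, (∃ n, s n = true) ∨ (∀ n, s n = false)

/-- Markov's Principle. -/
def MP : Prop := ∀ s : ℕ → Bool, ¬(∀ n, s n = false) → ∃ n, s n = true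

/-- Noetherian sets of naturals. -/
inductive Noeth : Set ℕ → Prop
  | intro : ∀ A : Set ℕ, (∀ x ∈ A, Noeth (A \ {x})) → Noeth A

/-! `W X (s|n)` says exactly that `X` holds at `s|m` for the successor `m` of `n` under `≻ₛ`
(the position after the first red one at or after `n`, if any). Hence on the suffixes of `s`
the least fixed point of `W` is the least fixed point of the accessibility step, i.e. `Acc`. -/

lemma suff_suff (s : ℕ → Bool) (m k : ℕ) : suff (suff s m) k = suff s (m + k) := by
  funext j
  simp [suff, Nat.add_assoc]

lemma W_mono {X X' : (ℕ → Bool) → Prop} (h : ∀ t, X t → X' t) {t : ℕ → Bool} (hX : W X t) :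
    W X' t := by
  obtain ⟨Y, hYt, hstep⟩ := hX
  exact ⟨Y, hYt, fun u hu => ⟨fun hred => h _ ((hstep u hu).1 hred), (hstep u hu).2⟩⟩

lemma pre_of_W {t : ℕ → Bool} (h : W pre t) : pre t :=
  fun P hP => hP t (W_mono (fun _ hu => hu P hP) h)

lemma W_suff_iff (X : (ℕ → Bool) → Prop) (s : ℕ → Bool) (n : ℕ) :
    W X (suff s n) ↔ ∀ m, succs s n m → X (suff s m) := by
  constructor
  · rintro ⟨Y, hYn, hstep⟩ m ⟨l, hnl, hblue, hred, rfl⟩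
    have hY : ∀ k, n ≤ k → k ≤ l → Y (suff s k) := by
      intro k hnk
      induction k, hnk using Nat.le_induction with
      | base => exact fun _ => hYn
      | succ k hnk ih =>
        intro hkl
        simpa only [suff_suff] using (hstep _ (ih (by omega))).2 (hblue k hnk (by omega))
    simpa only [suff_suff] using (hstep _ (hY l hnl le_rfl)).1 hred
  · intro hX
    refine ⟨fun t => ∃ m, n ≤ m ∧ (∀ k, n ≤ k → k < m → s k = false) ∧ t = suff s m,
      ⟨n, le_rfl, fun k hnk hkn => absurd hkn (by omega), rfl⟩, ?_⟩
    rintro _ ⟨m, hnm, hblue, rfl⟩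
    rw [suff_suff]
    refine ⟨fun hred => hX _ ⟨m, hnm, hblue, hred, rfl⟩, fun hm => ⟨m + 1, by omega, ?_, rfl⟩⟩
    intro k hnk hkm
    rcases Nat.lt_or_ge k m with hkm' | hmk
    · exact hblue k hnk hkm'
    · obtain rfl : k = m := by omega
      exact hm

theorem stmt_2 : ∀ (s : ℕ → Bool) (n : ℕ),
    pre (suff s n) ↔ Acc (fun a b => succs s b a) n := by
  intro s n
  constructor
  · intro hpre
    refine hpre (fun t => ∀ m, suff s m = t → Acc (fun a b => succs s b a) m) ?_ n rfl
    rintro _ hW m rfl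
    exact ⟨_, fun m' hm' => (W_suff_iff _ s m).1 hW m' hm' m' rfl⟩
  · intro hacc
    induction hacc with
    | intro n _ ih => exact pre_of_W ((W_suff_iff pre s n).2 ih)
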